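/- arXiv:2203.14243 — 6 statements merged into one kernel-verified Lean document; each statement's English description precedes it below -/
import Mathlib

section
/- Let H be a complex Hilbert space, α ∈ ℂ with |α| < 1, and w a bounded operator on H with ‖w‖ < 1. Then ‖φ_α(w)‖ < 1, where φ_α(w) := (w - α·I)(I - conj(α)·w)⁻¹. -/
open ContinuousLinearMap

/-- The operator Möbius transform `φ_α(w) = (w - α·I)(I - conj(α)·w)⁻¹`. -/
noncomputable def mobius {H : Type*} [NormedAddCommGroup H] [InnerProductSpace ℂ H]
    (α : ℂ) (w : H →L[ℂ] H) : H →L[ℂ] H :=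
  (w - α • 1) * Ring.inverse (1 - (starRingEnd ℂ α) • w)

/-!
Operator version of `1 - |φ_α(z)|² = (1 - |α|²)(1 - |z|²) / |1 - ᾱz|²`: for every vector `y`,
`‖wy - αy‖² = ‖y - ᾱwy‖² - (1 - |α|²)(‖y‖² - ‖wy‖²)`. With `x = (I - ᾱw)y` this reads
`‖φ_α(w)x‖² ≤ ‖x‖² - (1 - |α|²)(1 - ‖w‖²)‖y‖²`, and `‖x‖ ≤ 2‖y‖` turns it into
`‖φ_α(w)x‖² ≤ (1 - (1 - |α|²)(1 - ‖w‖²)/4)‖x‖²`.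
-/

section

variable {𝕜 E : Type*} [RCLike 𝕜] [NormedAddCommGroup E] [InnerProductSpace 𝕜 E]

theorem norm_sub_smul_sq_eq (α : 𝕜) (a b : E) :
    ‖a - α • b‖ ^ 2 = ‖b - starRingEnd 𝕜 α • a‖ ^ 2 - (1 - ‖α‖ ^ 2) * (‖b‖ ^ 2 - ‖a‖ ^ 2) := by
  have hre : RCLike.re (α * starRingEnd 𝕜 (inner 𝕜 b a)) =
      RCLike.re (starRingEnd 𝕜 α * inner 𝕜 b a) := by
    rw [← RCLike.conj_re, map_mul, RCLike.conj_conj]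
  rw [norm_sub_sq (𝕜 := 𝕜), norm_sub_sq (𝕜 := 𝕜), inner_smul_right, inner_smul_right,
    norm_smul, norm_smul, RCLike.norm_conj, ← inner_conj_symm a b, hre]
  ring

theorem norm_sub_smul_sq_le {α : 𝕜} (hα : ‖α‖ ≤ 1) {w : E →L[𝕜] E} (hw : ‖w‖ ≤ 1) (y : E) :
    ‖w y - α • y‖ ^ 2 ≤
      (1 - (1 - ‖α‖ ^ 2) * (1 - ‖w‖ ^ 2) / 4) * ‖y - starRingEnd 𝕜 α • w y‖ ^ 2 := by
  set x := y - starRingEnd 𝕜 α • w y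
  have hwy : ‖w y‖ ≤ ‖w‖ * ‖y‖ := w.le_opNorm y
  have hx : ‖x‖ ≤ 2 * ‖y‖ :=
    calc ‖x‖ ≤ ‖y‖ + ‖α‖ * ‖w y‖ := by
          simpa only [norm_smul, RCLike.norm_conj] using norm_sub_le y (starRingEnd 𝕜 α • w y)
      _ ≤ ‖y‖ + 1 * (1 * ‖y‖) := by gcongr; exact hwy.trans (by gcongr)
      _ = 2 * ‖y‖ := by ring
  have hgap : (1 - ‖w‖ ^ 2) * ‖x‖ ^ 2 / 4 ≤ ‖y‖ ^ 2 - ‖w y‖ ^ 2 := by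
    have : ‖w y‖ ^ 2 ≤ ‖w‖ ^ 2 * ‖y‖ ^ 2 := by rw [← mul_pow]; gcongr
    have : ‖x‖ ^ 2 ≤ 4 * ‖y‖ ^ 2 := by nlinarith [norm_nonneg x]
    nlinarith [mul_le_mul_of_nonneg_left this (by nlinarith [norm_nonneg w] : 0 ≤ 1 - ‖w‖ ^ 2)]
  rw [norm_sub_smul_sq_eq]
  nlinarith [mul_le_mul_of_nonneg_left hgap (by nlinarith [norm_nonneg α] : 0 ≤ 1 - ‖α‖ ^ 2)]

end

theorem ContinuousLinearMap.opNorm_lt_one_of_norm_apply_sq_le {𝕜 E F : Type*}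
    [NontriviallyNormedField 𝕜] [SeminormedAddCommGroup E] [SeminormedAddCommGroup F]
    [NormedSpace 𝕜 E] [NormedSpace 𝕜 F] (T : E →L[𝕜] F) {c : ℝ} (hc : c < 1)
    (hT : ∀ x, ‖T x‖ ^ 2 ≤ c * ‖x‖ ^ 2) : ‖T‖ < 1 := by
  refine (T.opNorm_le_bound (Real.sqrt_nonneg c) fun x ↦ ?_).trans_lt
    ((Real.sqrt_lt' one_pos).2 (by simpa using hc))
  rw [← Real.sqrt_sq (norm_nonneg (T x)), ← Real.sqrt_sq (norm_nonneg x),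
    ← Real.sqrt_mul' _ (sq_nonneg _)]
  exact Real.sqrt_le_sqrt (hT x)

theorem mobius_apply_sub_smul {H : Type*} [NormedAddCommGroup H] [InnerProductSpace ℂ H]
    [CompleteSpace H] {α : ℂ} {w : H →L[ℂ] H} (h : ‖starRingEnd ℂ α • w‖ < 1) (y : H) :
    mobius α w (y - starRingEnd ℂ α • w y) = w y - α • y := by
  set U := Units.oneSub _ h
  calc mobius α w (y - starRingEnd ℂ α • w y) = ((w - α • 1) * (↑U⁻¹ * ↑U)) y := by
        rw [mobius, NormedRing.inverse_one_sub _ h]; rfl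
    _ = w y - α • y := by simp

theorem stmt1 {H : Type*} [NormedAddCommGroup H] [InnerProductSpace ℂ H] [CompleteSpace H]
    (α : ℂ) (hα : ‖α‖ < 1) (w : H →L[ℂ] H) (hw : ‖w‖ < 1) :
    ‖mobius α w‖ < 1 := by
  have hconj : ‖starRingEnd ℂ α • w‖ < 1 := by
    rw [norm_smul, RCLike.norm_conj]
    nlinarith [norm_nonneg α, norm_nonneg w]
  have hα' : 0 < 1 - ‖α‖ ^ 2 := by nlinarith [norm_nonneg α]
  have hw' : 0 < 1 - ‖w‖ ^ 2 := by nlinarith [norm_nonneg w]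
  have hgap : 0 < (1 - ‖α‖ ^ 2) * (1 - ‖w‖ ^ 2) / 4 := by positivity
  refine (mobius α w).opNorm_lt_one_of_norm_apply_sq_le (sub_lt_self 1 hgap) fun x ↦ ?_
  set U := Units.oneSub _ hconj
  obtain ⟨y, rfl⟩ : ∃ y, y - starRingEnd ℂ α • w y = x := by
    refine ⟨(↑U⁻¹ : H →L[ℂ] H) x, ?_⟩
    simpa [U] using congr($(U.mul_inv) x)
  rw [mobius_apply_sub_smul hconj]
  exact norm_sub_smul_sq_le hα.le hw.le y
end

section
/- Let H be a complex Hilbert space and α ∈ ℂ with |α| < 1. For any bounded operator w on H with ‖w‖ ≤ 1, φ_{-α}(φ_α(w)) = w, i.e. the Möbius transform φ_α on the closed unit ball of operators has inverse φ_{-α}. -/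
open ContinuousLinearMap

/- With `u = 1 - b • w` and `v = (w - a • 1) u⁻¹`, both `(1 + b • v) u` and `(v + a • 1) u`
collapse to multiples of `1 - a b`, namely `(1 - a b) • 1` and `(1 - a b) • w`. -/
theorem mul_inverse_one_add_smul_of_eq_mul_inverse {𝕜 A : Type*} [Field 𝕜] [Ring A]
    [Algebra 𝕜 A] {a b : 𝕜} (hab : a * b ≠ 1) {w v : A} (hw : IsUnit (1 - b • w))
    (hv : v = (w - a • 1) * Ring.inverse (1 - b • w)) :
    (v + a • 1) * Ring.inverse (1 + b • v) = w := by
  obtain ⟨u, hu⟩ := hw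
  rw [← hu, Ring.inverse_unit] at hv
  have hvu : v * u = w - a • 1 := by rw [hv, Units.inv_mul_cancel_right]
  have hden : (1 + b • v) * u = (1 - a * b) • 1 := by
    rw [add_mul, one_mul, smul_mul_assoc, hvu, hu]
    module
  have hnum : (v + a • 1) * u = (1 - a * b) • w := by
    rw [add_mul, hvu, smul_mul_assoc, one_mul, hu]
    module
  have hunit : IsUnit (1 + b • v) := by
    rw [(u.eq_mul_inv_iff_mul_eq).2 hden, ← Algebra.algebraMap_eq_smul_one]
    exact ((sub_ne_zero.2 hab.symm).isUnit.map _).mul u⁻¹.isUnit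
  rw [eq_comm, Ring.eq_mul_inverse_iff_mul_eq _ _ _ hunit, ← u.mul_left_inj, mul_assoc, hden,
    hnum, mul_smul_comm, mul_one]

theorem stmt2 {H : Type*} [NormedAddCommGroup H] [InnerProductSpace ℂ H] [CompleteSpace H]
    (α : ℂ) (hα : ‖α‖ < 1) (w : H →L[ℂ] H) (hw : ‖w‖ ≤ 1) :
    mobius (-α) (mobius α w) = w := by
  have hnorm : ‖starRingEnd ℂ α • w‖ < 1 := by
    rw [norm_smul, Complex.norm_conj]
    nlinarith [norm_nonneg α, norm_nonneg w]
  have hαα : α * starRingEnd ℂ α ≠ 1 := by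
    intro h
    have := congrArg norm h
    rw [norm_mul, Complex.norm_conj, norm_one] at this
    nlinarith [norm_nonneg α]
  rw [mobius, map_neg, neg_smul, neg_smul, sub_neg_eq_add, sub_neg_eq_add]
  exact mul_inverse_one_add_smul_of_eq_mul_inverse hαα (Units.oneSub _ hnorm).isUnit rfl
end

section
/- Let H be a complex Hilbert space and f a bounded operator on H with ‖f‖ ≤ r < 1. Define h := (I + f)(I - f)⁻¹. Then the real part of h satisfies Re h := (h + h*)/2 ≥ ((1 - r)/(1 + r))·I in the sense of positive semidefiniteness of Re h - ((1-r)/(1+r))·I. -/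
open ContinuousLinearMap

/-!
Substituting `x = (1 - f) y` turns `h x` into `y + f y`, so
`Re ⟪x, h x⟫ = ‖y‖² - ‖f y‖² ≥ (1 - r²) ‖y‖²`, while `‖x‖ ≤ (1 + r) ‖y‖`.
-/

theorem re_inner_sub_add_eq_norm_sq_sub_norm_sq {𝕜 E : Type*} [RCLike 𝕜] [NormedAddCommGroup E]
    [InnerProductSpace 𝕜 E] (a b : E) :
    RCLike.re (inner 𝕜 (a - b) (a + b)) = ‖a‖ ^ 2 - ‖b‖ ^ 2 := by
  simp only [inner_sub_left, inner_add_right, map_add, map_sub, inner_self_eq_norm_sq,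
    inner_re_symm b a]
  ring

theorem div_mul_norm_sub_sq_le_norm_sq_sub_norm_sq {E : Type*} [SeminormedAddCommGroup E]
    {a b : E} {r : ℝ} (hr₀ : 0 ≤ r) (hr₁ : r ≤ 1) (hb : ‖b‖ ≤ r * ‖a‖) :
    (1 - r) / (1 + r) * ‖a - b‖ ^ 2 ≤ ‖a‖ ^ 2 - ‖b‖ ^ 2 := by
  have hab : ‖a - b‖ ≤ (1 + r) * ‖a‖ := by
    linarith [norm_sub_le a b]
  calc (1 - r) / (1 + r) * ‖a - b‖ ^ 2
      ≤ (1 - r) / (1 + r) * ((1 + r) * ‖a‖) ^ 2 := by gcongr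
    _ = (1 - r ^ 2) * ‖a‖ ^ 2 := by field_simp; ring
    _ ≤ ‖a‖ ^ 2 - ‖b‖ ^ 2 := by nlinarith [norm_nonneg b, norm_nonneg a]

/-- If `‖f‖ ≤ r < 1` and `h = (I + f)(I - f)⁻¹`, then `Re h ≥ ((1-r)/(1+r))·I` in the sense
that `Re ⟪x, h x⟫ = ⟪x, (Re h) x⟫ ≥ ((1-r)/(1+r))·‖x‖²` for all `x`. -/
theorem stmt5 {H : Type*} [NormedAddCommGroup H] [InnerProductSpace ℂ H] [CompleteSpace H]
    (f : H →L[ℂ] H) (r : ℝ) (hfr : ‖f‖ ≤ r) (hr : r < 1)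
    (h : H →L[ℂ] H) (hh : h = (1 + f) * Ring.inverse ((1 : H →L[ℂ] H) - f)) :
    ∀ x : H, ((1 - r) / (1 + r)) * ‖x‖ ^ 2 ≤ (inner ℂ x (h x) : ℂ).re := by
  intro x
  set y := Ring.inverse (1 - f) x
  have hx : x = y - f y := by
    have := Ring.mul_inverse_cancel _ (isUnit_one_sub_of_norm_lt_one (hfr.trans_lt hr))
    simpa using (congrArg (· x) this).symm
  have hhx : h x = y + f y := by simp [hh, y]
  rw [hhx, hx]
  calc (1 - r) / (1 + r) * ‖y - f y‖ ^ 2 ≤ ‖y‖ ^ 2 - ‖f y‖ ^ 2 :=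
        div_mul_norm_sub_sq_le_norm_sq_sub_norm_sq ((norm_nonneg f).trans hfr) hr.le
          (f.le_of_opNorm_le hfr y)
    _ = (inner ℂ (y - f y) (y + f y)).re :=
        (re_inner_sub_add_eq_norm_sq_sub_norm_sq (𝕜 := ℂ) y (f y)).symm
end

section
/- Let H be a complex Hilbert space and f a bounded operator with ‖f‖ ≤ ρ < 1, and let 0 < r < 1. Then Re((I + r·f)(I - r·f)⁻¹) ≥ ((1 - r²)/4)·I, assuming ‖I - r·f‖ ≤ 2. -/
/-!
Write `x = (1 - g) y`. Then `(1 + g)(1 - g)⁻¹ x = y + g y`, so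
`Re ⟪x, (1 + g)(1 - g)⁻¹ x⟫ = Re ⟪y - g y, y + g y⟫ = ‖y‖² - ‖g y‖² ≥ (1 - r²) ‖y‖²`
when `‖g‖ ≤ r`, while `‖x‖ ≤ ‖1 - g‖ ‖y‖ ≤ 2 ‖y‖`.
-/

open RCLike

section CayleyTransform

variable {𝕜 E : Type*} [RCLike 𝕜] [NormedAddCommGroup E] [InnerProductSpace 𝕜 E]

theorem re_inner_sub_add (a b : E) :
    re (inner 𝕜 (a - b) (a + b)) = ‖a‖ ^ 2 - ‖b‖ ^ 2 := by
  simp only [inner_sub_left, inner_add_right, map_add, map_sub, inner_self_eq_norm_sq,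
    inner_re_symm (𝕜 := 𝕜) b a]
  ring

theorem cayley_apply_one_sub_apply {g : E →L[𝕜] E} (hg : IsUnit (1 - g)) (y : E) :
    ((1 + g) * Ring.inverse (1 - g)) ((1 - g) y) = y + g y := by
  rw [mul_apply_eq_comp, ← mul_apply_eq_comp (Ring.inverse _), Ring.inverse_mul_cancel _ hg,
    one_apply_eq_self, add_apply, one_apply_eq_self]

theorem one_sub_sq_mul_norm_sq_le_re_inner_cayley [CompleteSpace E] {g : E →L[𝕜] E} {r C : ℝ}
    (hg : ‖g‖ ≤ r) (hr : r < 1) (hC : ‖1 - g‖ ≤ C) (x : E) :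
    (1 - r ^ 2) * ‖x‖ ^ 2 ≤ C ^ 2 * re (inner 𝕜 x (((1 + g) * Ring.inverse (1 - g)) x)) := by
  have hunit : IsUnit (1 - g) := (Units.oneSub g (hg.trans_lt hr)).isUnit
  obtain ⟨y, rfl⟩ : ∃ y, (1 - g) y = x :=
    ⟨Ring.inverse (1 - g) x, by
      rw [← mul_apply_eq_comp, Ring.mul_inverse_cancel _ hunit, one_apply_eq_self]⟩
  rw [cayley_apply_one_sub_apply hunit, sub_apply, one_apply_eq_self, re_inner_sub_add]
  have hr0 : 0 ≤ r := (norm_nonneg g).trans hg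
  have hgy : ‖g y‖ ≤ r * ‖y‖ :=
    (g.le_opNorm y).trans (mul_le_mul_of_nonneg_right hg (norm_nonneg y))
  have hx : ‖y - g y‖ ≤ C * ‖y‖ :=
    ((1 - g).le_opNorm y).trans (mul_le_mul_of_nonneg_right hC (norm_nonneg y))
  have hgy2 : ‖g y‖ ^ 2 ≤ r ^ 2 * ‖y‖ ^ 2 := by
    rw [← mul_pow]; exact pow_le_pow_left₀ (norm_nonneg _) hgy 2
  have hx2 : ‖y - g y‖ ^ 2 ≤ C ^ 2 * ‖y‖ ^ 2 := by
    rw [← mul_pow]; exact pow_le_pow_left₀ (norm_nonneg _) hx 2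
  have hr2 : 0 ≤ 1 - r ^ 2 := by nlinarith
  calc (1 - r ^ 2) * ‖y - g y‖ ^ 2 ≤ (1 - r ^ 2) * (C ^ 2 * ‖y‖ ^ 2) :=
        mul_le_mul_of_nonneg_left hx2 hr2
    _ = C ^ 2 * ((1 - r ^ 2) * ‖y‖ ^ 2) := by ring
    _ ≤ C ^ 2 * (‖y‖ ^ 2 - ‖g y‖ ^ 2) :=
        mul_le_mul_of_nonneg_left (by nlinarith) (sq_nonneg C)

end CayleyTransform

/-- If `‖f‖ ≤ ρ < 1`, `0 < r < 1` and `‖I - r·f‖ ≤ 2`, then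
`Re((I + r·f)(I - r·f)⁻¹) ≥ ((1 - r²)/4)·I`. -/
theorem stmt11 {H : Type*} [NormedAddCommGroup H] [InnerProductSpace ℂ H] [CompleteSpace H]
    (f : H →L[ℂ] H) (ρ : ℝ) (hfρ : ‖f‖ ≤ ρ) (hρ : ρ < 1)
    (r : ℝ) (hr0 : 0 < r) (hr1 : r < 1)
    (hnorm : ‖(1 : H →L[ℂ] H) - (r : ℂ) • f‖ ≤ 2) :
    ∀ x : H, ((1 - r ^ 2) / 4) * ‖x‖ ^ 2 ≤
      (inner ℂ x ((((1 : H →L[ℂ] H) + (r : ℂ) • f) *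
        Ring.inverse ((1 : H →L[ℂ] H) - (r : ℂ) • f)) x) : ℂ).re := by
  intro x
  have hrf : ‖(r : ℂ) • f‖ ≤ r := by
    rw [norm_smul, Complex.norm_real, Real.norm_of_nonneg hr0.le]
    exact mul_le_of_le_one_right hr0.le (hfρ.trans hρ.le)
  have key := one_sub_sq_mul_norm_sq_le_re_inner_cayley hrf hr1 hnorm x
  rw [RCLike.re_to_complex] at key
  linarith
end

section
/- Let U = [[A, B], [C, 0]] : (X ⊕ ℂ) → (Y ⊕ ℂ) be a unitary operator between Hilbert space direct sums (with D = 0), and let T : X → Y be a bounded operator with ‖T‖ ≤ r ≤ 1 such that I - T∘A is invertible. Then the operator F := C ∘ (I - T∘A)⁻¹ ∘ T ∘ B : ℂ → ℂ (i.e. a scalar) satisfies |F| ≤ r. Equivalently, r²·I - F F* = C (I - TA)⁻¹ [r²·I - T T* + (1 - r²)·T A A* T*] (I - A* T*)⁻¹ C* ≥ 0. -/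
/-!
Put `y = B z` and `x = (I - TA)⁻¹ T y`, so that `x = T (A x + y)`. The column `[A; C]` is an
isometry and `A* B = 0`, hence `‖x‖² = ‖A x‖² + ‖C x‖²` and `‖A x + y‖² = ‖A x‖² + ‖y‖²`.
From `‖x‖ ≤ r ‖A x + y‖` we get `‖C x‖² ≤ r² (‖A x‖² + ‖y‖²) - ‖A x‖² ≤ r² ‖y‖²` since `r ≤ 1`,
and `‖y‖ = ‖z‖` as `B` is an isometry.
-/

open ContinuousLinearMap

section FixedPoint

variable {𝕜 E F : Type*} [NontriviallyNormedField 𝕜]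
  [NormedAddCommGroup E] [NormedSpace 𝕜 E] [NormedAddCommGroup F] [NormedSpace 𝕜 F]

theorem inverse_one_sub_comp_apply_eq_apply_add {T : F →L[𝕜] E} {A : E →L[𝕜] F}
    (hinv : IsUnit ((1 : E →L[𝕜] E) - T ∘L A)) (y : F) :
    Ring.inverse (1 - T ∘L A) (T y) = T (A (Ring.inverse (1 - T ∘L A) (T y)) + y) := by
  have h : ((1 - T ∘L A) * Ring.inverse (1 - T ∘L A)) (T y) = T y := by
    rw [Ring.mul_inverse_cancel _ hinv, one_apply_eq_self]
  simp only [mul_apply_eq_comp, sub_apply, one_apply_eq_self, comp_apply] at h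
  rw [map_add]
  exact sub_eq_iff_eq_add'.1 h

end FixedPoint

section Adjoint

variable {𝕜 E F G : Type*} [RCLike 𝕜]
  [NormedAddCommGroup E] [InnerProductSpace 𝕜 E] [CompleteSpace E]
  [NormedAddCommGroup F] [InnerProductSpace 𝕜 F] [CompleteSpace F]
  [NormedAddCommGroup G] [InnerProductSpace 𝕜 G] [CompleteSpace G]

theorem norm_sq_add_norm_sq_of_adjoint_comp_add {A : E →L[𝕜] F} {C : E →L[𝕜] G}
    (h : adjoint A ∘L A + adjoint C ∘L C = 1) (x : E) :
    ‖A x‖ ^ 2 + ‖C x‖ ^ 2 = ‖x‖ ^ 2 := by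
  rw [apply_norm_sq_eq_inner_adjoint_left, apply_norm_sq_eq_inner_adjoint_left, ← map_add,
    ← inner_add_left, ← add_apply, h, one_apply_eq_self, inner_self_eq_norm_sq]

theorem norm_apply_le_of_eq_apply_add {A : E →L[𝕜] F} {C : E →L[𝕜] G} {T : F →L[𝕜] E} {r : ℝ}
    (hAC : adjoint A ∘L A + adjoint C ∘L C = 1) (hT : ‖T‖ ≤ r) (hr : r ≤ 1)
    {y : F} (hy : adjoint A y = 0) {x : E} (hx : x = T (A x + y)) :
    ‖C x‖ ≤ r * ‖y‖ := by
  have hr0 : 0 ≤ r := (norm_nonneg T).trans hT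
  have horth : inner 𝕜 (A x) y = 0 := by rw [← adjoint_inner_right, hy, inner_zero_right]
  have hpyth : ‖A x + y‖ ^ 2 = ‖A x‖ ^ 2 + ‖y‖ ^ 2 := by
    simpa only [sq] using norm_add_sq_eq_norm_sq_add_norm_sq_of_inner_eq_zero _ _ horth
  have hTx : ‖x‖ ≤ r * ‖A x + y‖ := by
    calc ‖x‖ = ‖T (A x + y)‖ := by rw [← hx]
      _ ≤ ‖T‖ * ‖A x + y‖ := le_opNorm T _
      _ ≤ r * ‖A x + y‖ := by gcongr
  have hsq : ‖C x‖ ^ 2 ≤ (r * ‖y‖) ^ 2 := by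
    have hx2 : ‖x‖ ^ 2 ≤ r ^ 2 * (‖A x‖ ^ 2 + ‖y‖ ^ 2) := by
      rw [← hpyth, ← mul_pow]
      exact pow_le_pow_left₀ (norm_nonneg x) hTx 2
    have hr2 : r ^ 2 ≤ 1 := pow_le_one₀ hr0 hr
    nlinarith [norm_sq_add_norm_sq_of_adjoint_comp_add hAC x, sq_nonneg ‖A x‖]
  exact (pow_le_pow_iff_left₀ (norm_nonneg _) (by positivity) two_ne_zero).1 hsq

end Adjoint

theorem stmt14_general {X Y : Type*} [NormedAddCommGroup X] [InnerProductSpace ℂ X] [CompleteSpace X]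
    [NormedAddCommGroup Y] [InnerProductSpace ℂ Y] [CompleteSpace Y]
    (A : X →L[ℂ] Y) (B : ℂ →L[ℂ] Y) (C : X →L[ℂ] ℂ)
    -- relations from U* U = I :
    (k11 : adjoint A ∘L A + adjoint C ∘L C = 1)
    (k12 : adjoint A ∘L B = 0)
    (k22 : adjoint B ∘L B = 1)
    (T : Y →L[ℂ] X) (r : ℝ) (hT : ‖T‖ ≤ r) (hr : r ≤ 1)
    (hinv : IsUnit ((1 : X →L[ℂ] X) - T ∘L A)) :
    ‖C ∘L Ring.inverse ((1 : X →L[ℂ] X) - T ∘L A) ∘L T ∘L B‖ ≤ r := by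
  refine opNorm_le_bound _ ((norm_nonneg T).trans hT) fun z => ?_
  have hBz : adjoint A (B z) = 0 := by rw [← comp_apply, k12, zero_apply]
  calc ‖C (Ring.inverse (1 - T ∘L A) (T (B z)))‖
      ≤ r * ‖B z‖ := norm_apply_le_of_eq_apply_add k11 hT hr hBz
        (inverse_one_sub_comp_apply_eq_apply_add hinv (B z))
    _ = r * ‖z‖ := by rw [(norm_map_iff_adjoint_comp_self B).2 k22 z]

/-- Scalar-output transfer-function estimate (Schwarz lemma step). The block operator
`U = [[A, B], [C, 0]] : X ⊕ ℂ → Y ⊕ ℂ` is unitary, which is encoded by the block relations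
coming from `U U* = I` and `U* U = I` (with `D = 0`). If `‖T‖ ≤ r ≤ 1` and `I - T∘A` is
invertible, then the scalar `F = C (I - TA)⁻¹ T B` satisfies `‖F‖ ≤ r`. -/
theorem stmt14 {X Y : Type*} [NormedAddCommGroup X] [InnerProductSpace ℂ X] [CompleteSpace X]
    [NormedAddCommGroup Y] [InnerProductSpace ℂ Y] [CompleteSpace Y]
    (A : X →L[ℂ] Y) (B : ℂ →L[ℂ] Y) (C : X →L[ℂ] ℂ)
    -- relations from U U* = I :
    (h11 : A ∘L adjoint A + B ∘L adjoint B = 1)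
    (h12 : A ∘L adjoint C = 0)
    (h21 : C ∘L adjoint A = 0)
    (h22 : C ∘L adjoint C = 1)
    -- relations from U* U = I :
    (k11 : adjoint A ∘L A + adjoint C ∘L C = 1)
    (k12 : adjoint A ∘L B = 0)
    (k22 : adjoint B ∘L B = 1)
    (T : Y →L[ℂ] X) (r : ℝ) (hT : ‖T‖ ≤ r) (hr : r ≤ 1)
    (hinv : IsUnit ((1 : X →L[ℂ] X) - T ∘L A)) :
    ‖C ∘L Ring.inverse ((1 : X →L[ℂ] X) - T ∘L A) ∘L T ∘L B‖ ≤ r :=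
  stmt14_general A B C k11 k12 k22 T r hT hr hinv
end

section
/- Let H be a complex Hilbert space and h, h' bounded operators on H with Re h ≥ c·I and Re h' ≥ c·I for some c > 0, and ‖h‖, ‖h'‖ ≤ M. Then ‖(h - I)(h + I)⁻¹ - (h' - I)(h' + I)⁻¹‖ ≤ (1/√(2c+1) + 2·(M+1)/(2c+1))·‖h - h'‖. In particular the Cayley transform h ↦ (h - I)(h + I)⁻¹ is Lipschitz on {h : Re h ≥ c·I, ‖h‖ ≤ M}. -/
/-!
Since `(a - 1)(a + 1)⁻¹ = 1 - 2(a + 1)⁻¹`, the resolvent identity gives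
`C(h) - C(h') = 2 (h' + 1)⁻¹ (h - h') (h + 1)⁻¹` for the Cayley transform `C`. The coercivity
`Re (h + 1) ≥ (c + 1)·I` bounds `h + 1` below by `c + 1`, so by Lax–Milgram it is invertible with
`‖(h + 1)⁻¹‖ ≤ 1/(c + 1)`. Hence `C` is `2/(c + 1)²`-Lipschitz, and `2/(c + 1)² ≤ 2/(2c + 1)`.
-/

open ContinuousLinearMap

open scoped NNReal Ring

section Cayley

variable {R : Type*}

noncomputable def cayley [Ring R] (a : R) : R := (a - 1) * (a + 1)⁻¹ʳ

theorem cayley_eq_one_sub [Ring R] {a : R} (ha : IsUnit (a + 1)) :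
    cayley a = 1 - 2 • (a + 1)⁻¹ʳ := by
  rw [cayley, show a - 1 = (a + 1) - 2 • 1 by rw [two_nsmul]; abel, sub_mul,
    Ring.mul_inverse_cancel _ ha, smul_mul_assoc, one_mul]

theorem cayley_sub_cayley [Ring R] {a b : R} (ha : IsUnit (a + 1)) (hb : IsUnit (b + 1)) :
    cayley a - cayley b = 2 • ((b + 1)⁻¹ʳ * (a - b) * (a + 1)⁻¹ʳ) := by
  rw [cayley_eq_one_sub ha, cayley_eq_one_sub hb, ← add_sub_add_right_eq_sub a b 1,
    ← Ring.inverse_sub_inverse (iff_of_true hb ha), smul_sub]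
  abel

theorem norm_cayley_sub_cayley_le [NormedRing R] {a b : R} {K : ℝ} (ha : IsUnit (a + 1))
    (hb : IsUnit (b + 1)) (hKa : ‖(a + 1)⁻¹ʳ‖ ≤ K) (hKb : ‖(b + 1)⁻¹ʳ‖ ≤ K) :
    ‖cayley a - cayley b‖ ≤ 2 * K ^ 2 * ‖a - b‖ := by
  rw [cayley_sub_cayley ha hb]
  have hK : 0 ≤ K := (norm_nonneg _).trans hKa
  calc ‖2 • ((b + 1)⁻¹ʳ * (a - b) * (a + 1)⁻¹ʳ)‖
      ≤ 2 * (‖(b + 1)⁻¹ʳ‖ * ‖a - b‖ * ‖(a + 1)⁻¹ʳ‖) := by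
        refine norm_nsmul_le.trans ?_
        push_cast
        gcongr
        exact norm_mul₃_le
    _ ≤ 2 * (K * ‖a - b‖ * K) := by gcongr
    _ = 2 * K ^ 2 * ‖a - b‖ := by ring

end Cayley

section Coercive

variable {𝕜 E : Type*} [RCLike 𝕜] [NormedAddCommGroup E]

theorem ContinuousLinearMap.norm_inverse_le_of_antilipschitz [NormedSpace 𝕜 E] {f : E →L[𝕜] E}
    {K : ℝ≥0} (hu : IsUnit f) (hf : AntilipschitzWith K f) : ‖f⁻¹ʳ‖ ≤ K :=
  opNorm_le_bound _ K.2 fun y => by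
    have hy : f (f⁻¹ʳ y) = y := DFunLike.congr_fun (Ring.mul_inverse_cancel f hu) y
    simpa only [hy] using f.bound_of_antilipschitz hf (f⁻¹ʳ y)

variable [InnerProductSpace 𝕜 E] {f : E →L[𝕜] E} {c : ℝ}

theorem ContinuousLinearMap.le_norm_inner_map_of_le_re_inner
    (hf : ∀ x, c * ‖x‖ ^ 2 ≤ RCLike.re (inner 𝕜 x (f x))) (x : E) :
    ‖x‖ ^ 2 * c ≤ ‖inner 𝕜 (f x) x‖ := by
  rw [← norm_inner_symm, mul_comm]
  exact (hf x).trans (RCLike.re_le_norm _)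

theorem ContinuousLinearMap.add_one_le_re_inner
    (hf : ∀ x, c * ‖x‖ ^ 2 ≤ RCLike.re (inner 𝕜 x (f x))) (x : E) :
    (c + 1) * ‖x‖ ^ 2 ≤ RCLike.re (inner 𝕜 x ((f + 1) x)) := by
  simpa [inner_add_right, add_mul, inner_self_eq_norm_sq] using hf x

theorem ContinuousLinearMap.isUnit_of_le_re_inner [CompleteSpace E] (hc : 0 < c)
    (hf : ∀ x, c * ‖x‖ ^ 2 ≤ RCLike.re (inner 𝕜 x (f x))) : IsUnit f :=
  isUnit_of_forall_le_norm_inner_map f (c := ⟨c, hc.le⟩) hc (le_norm_inner_map_of_le_re_inner hf)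

theorem ContinuousLinearMap.norm_inverse_le_of_le_re_inner [CompleteSpace E] (hc : 0 < c)
    (hf : ∀ x, c * ‖x‖ ^ 2 ≤ RCLike.re (inner 𝕜 x (f x))) : ‖f⁻¹ʳ‖ ≤ c⁻¹ :=
  norm_inverse_le_of_antilipschitz (isUnit_of_le_re_inner hc hf)
    (antilipschitz_of_forall_le_inner_map f (c := ⟨c, hc.le⟩) hc
      (le_norm_inner_map_of_le_re_inner hf))

end Coercive

theorem stmt16_general {H : Type*} [NormedAddCommGroup H] [InnerProductSpace ℂ H] [CompleteSpace H]
    (h h' : H →L[ℂ] H) (c M : ℝ) (hc : 0 < c)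
    (hpos : ∀ x : H, c * ‖x‖ ^ 2 ≤ (inner ℂ x (h x) : ℂ).re)
    (hpos' : ∀ x : H, c * ‖x‖ ^ 2 ≤ (inner ℂ x (h' x) : ℂ).re)
    (hM : ‖h‖ ≤ M) :
    ‖(h - 1) * Ring.inverse (h + 1) - (h' - 1) * Ring.inverse (h' + 1)‖ ≤
      (1 / Real.sqrt (2 * c + 1) + 2 * (M + 1) / (2 * c + 1)) * ‖h - h'‖ := by
  have hc1 : 0 < c + 1 := by linarith
  have hshift := add_one_le_re_inner (𝕜 := ℂ) hpos
  have hshift' := add_one_le_re_inner (𝕜 := ℂ) hpos'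
  have hconst : 2 * (c + 1)⁻¹ ^ 2 ≤ 1 / Real.sqrt (2 * c + 1) + 2 * (M + 1) / (2 * c + 1) := by
    have hM0 : 0 ≤ M := (norm_nonneg h).trans hM
    have : 2 * (c + 1)⁻¹ ^ 2 ≤ 2 * (M + 1) / (2 * c + 1) := by
      rw [inv_pow, ← div_eq_mul_inv, div_le_div_iff₀ (by positivity) (by positivity)]
      nlinarith
    exact this.trans (le_add_of_nonneg_left (by positivity))
  calc ‖cayley h - cayley h'‖
      ≤ 2 * (c + 1)⁻¹ ^ 2 * ‖h - h'‖ :=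
        norm_cayley_sub_cayley_le (isUnit_of_le_re_inner hc1 hshift)
          (isUnit_of_le_re_inner hc1 hshift') (norm_inverse_le_of_le_re_inner hc1 hshift)
          (norm_inverse_le_of_le_re_inner hc1 hshift')
    _ ≤ _ := by gcongr

/-- The Cayley transform `h ↦ (h - I)(h + I)⁻¹` is Lipschitz on
`{h : Re h ≥ c·I, ‖h‖ ≤ M}` with the explicit constant `1/√(2c+1) + 2(M+1)/(2c+1)`. -/
theorem stmt16 {H : Type*} [NormedAddCommGroup H] [InnerProductSpace ℂ H] [CompleteSpace H]
    (h h' : H →L[ℂ] H) (c M : ℝ) (hc : 0 < c)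
    (hpos : ∀ x : H, c * ‖x‖ ^ 2 ≤ (inner ℂ x (h x) : ℂ).re)
    (hpos' : ∀ x : H, c * ‖x‖ ^ 2 ≤ (inner ℂ x (h' x) : ℂ).re)
    (hM : ‖h‖ ≤ M) (hM' : ‖h'‖ ≤ M) :
    ‖(h - 1) * Ring.inverse (h + 1) - (h' - 1) * Ring.inverse (h' + 1)‖ ≤
      (1 / Real.sqrt (2 * c + 1) + 2 * (M + 1) / (2 * c + 1)) * ‖h - h'‖ :=
  stmt16_general h h' c M hc hpos hpos' hM
end
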